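/- arXiv:2205.08614 — 5 statements merged into one kernel-verified Lean document; each statement's English description precedes it below -/
import Mathlib

section
/- Let d ≥ 1, let Σ ∈ ℝ^{d×d} be symmetric positive definite, let U ∈ ℝ^{d×d} be symmetric with Σ⁻¹ − 2U invertible, and let μ, b ∈ ℝ^d. Set Σ_Z := (Σ⁻¹ − 2U)⁻¹ and μ_Z := Σ_Z(2Ub + Σ⁻¹μ). Then for every y ∈ ℝ^d, −(1/2)(y−μ)ᵀΣ⁻¹(y−μ) + (y+b)ᵀU(y+b) = −(1/2)(y−μ_Z)ᵀΣ_Z⁻¹(y−μ_Z) + (μ+b)ᵀ(I_d − 2UΣ)⁻¹U(μ+b). -/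
open Matrix

private lemma dot_symm' {d : ℕ} {N : Matrix (Fin d) (Fin d) ℝ} (hN : N.IsSymm)
    (x z : Fin d → ℝ) : x ⬝ᵥ (N *ᵥ z) = z ⬝ᵥ (N *ᵥ x) := by
  rw [dotProduct_mulVec, ← mulVec_transpose, hN, dotProduct_comm]

/-- Completing the square in the exponent of a Gaussian integrand. -/
theorem stmt_2 (d : ℕ) (hd : 1 ≤ d)
    (S U : Matrix (Fin d) (Fin d) ℝ)
    (hSsym : S.IsSymm) (hSpd : S.PosDef) (hUsym : U.IsSymm)
    (hinv : IsUnit (S⁻¹ - (2 : ℝ) • U)) (μ b : Fin d → ℝ)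
    (SZ : Matrix (Fin d) (Fin d) ℝ) (hSZ : SZ = (S⁻¹ - (2 : ℝ) • U)⁻¹)
    (μZ : Fin d → ℝ) (hμZ : μZ = SZ *ᵥ ((2 : ℝ) • (U *ᵥ b) + S⁻¹ *ᵥ μ)) :
    ∀ y : Fin d → ℝ,
      -(1 / 2) * ((y - μ) ⬝ᵥ (S⁻¹ *ᵥ (y - μ))) + (y + b) ⬝ᵥ (U *ᵥ (y + b)) =
        -(1 / 2) * ((y - μZ) ⬝ᵥ (SZ⁻¹ *ᵥ (y - μZ))) +
          (μ + b) ⬝ᵥ (((1 - (2 : ℝ) • (U * S))⁻¹ * U) *ᵥ (μ + b)) := by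
  intro y
  set M : Matrix (Fin d) (Fin d) ℝ := S⁻¹ - (2 : ℝ) • U with hM
  have hSdet : IsUnit S.det := hSpd.det_pos.ne'.isUnit
  have hMdet : IsUnit M.det := (isUnit_iff_isUnit_det M).mp hinv
  have hPM : M⁻¹ * M = 1 := nonsing_inv_mul M hMdet
  have hMP : M * M⁻¹ = 1 := mul_nonsing_inv M hMdet
  have hA : S⁻¹ = M + (2 : ℝ) • U := by rw [hM]; abel
  have hAsym : (S⁻¹).IsSymm := by rw [Matrix.IsSymm, transpose_nonsing_inv, hSsym]
  have hMsym : M.IsSymm := by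
    rw [Matrix.IsSymm, hM, transpose_sub, transpose_smul, hAsym, hUsym]
  have hSZinv : SZ⁻¹ = M := by rw [hSZ, nonsing_inv_nonsing_inv M hMdet]
  have h1 : (1 : Matrix (Fin d) (Fin d) ℝ) - (2 : ℝ) • (U * S) = M * S := by
    rw [hM, sub_mul, smul_mul_assoc, nonsing_inv_mul S hSdet]
  have hMPU : M * (M⁻¹ * U) = U := by rw [← mul_assoc, hMP, one_mul]
  have hC : ((1 : Matrix (Fin d) (Fin d) ℝ) - (2 : ℝ) • (U * S))⁻¹ * U
      = U + (2 : ℝ) • (U * (M⁻¹ * U)) := by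
    rw [h1, Matrix.mul_inv_rev, hA, mul_assoc, add_mul, hMPU, smul_mul_assoc]
  obtain ⟨w, hw⟩ : ∃ w' : Fin d → ℝ, w' = μ + b := ⟨_, rfl⟩
  rw [show μ + b = w from hw.symm]
  obtain ⟨p, hp⟩ : ∃ p' : Fin d → ℝ, p' = M⁻¹ *ᵥ (U *ᵥ w) := ⟨_, rfl⟩
  have hMp : M *ᵥ p = U *ᵥ w := by
    rw [hp, mulVec_mulVec, hMP, one_mulVec]
  have hμZ' : μZ = μ + (2 : ℝ) • p := by
    have harg : (2 : ℝ) • (U *ᵥ b) + S⁻¹ *ᵥ μ = M *ᵥ μ + (2 : ℝ) • (U *ᵥ w) := by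
      rw [hA, add_mulVec, smul_mulVec, hw, mulVec_add, smul_add]; abel
    rw [hμZ, hSZ, harg, mulVec_add, mulVec_mulVec, hPM, one_mulVec, mulVec_smul, ← hp]
  have e3 : (y - μ) ⬝ᵥ (S⁻¹ *ᵥ (y - μ))
      = (y - μ) ⬝ᵥ (M *ᵥ (y - μ)) + 2 * ((y - μ) ⬝ᵥ (U *ᵥ (y - μ))) := by
    rw [hA, add_mulVec, smul_mulVec, dotProduct_add, dotProduct_smul, smul_eq_mul]
  have e4 : (y + b) ⬝ᵥ (U *ᵥ (y + b))
      = (y - μ) ⬝ᵥ (U *ᵥ (y - μ)) + 2 * ((y - μ) ⬝ᵥ (U *ᵥ w)) + w ⬝ᵥ (U *ᵥ w) := by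
    have hyb : y + b = (y - μ) + w := by rw [hw]; abel
    have hsym : w ⬝ᵥ (U *ᵥ (y - μ)) = (y - μ) ⬝ᵥ (U *ᵥ w) := dot_symm' hUsym w (y - μ)
    rw [hyb, mulVec_add, dotProduct_add, add_dotProduct, add_dotProduct]
    linear_combination hsym
  have s1 : p ⬝ᵥ (M *ᵥ (y - μ)) = (y - μ) ⬝ᵥ (U *ᵥ w) := by
    rw [dot_symm' hMsym, hMp]
  have e1 : (y - μZ) ⬝ᵥ (SZ⁻¹ *ᵥ (y - μZ))
      = (y - μ) ⬝ᵥ (M *ᵥ (y - μ)) - 4 * ((y - μ) ⬝ᵥ (U *ᵥ w))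
        + 4 * (p ⬝ᵥ (U *ᵥ w)) := by
    have hyμZ : y - μZ = (y - μ) - (2 : ℝ) • p := by rw [hμZ']; abel
    rw [hSZinv, hyμZ, mulVec_sub, mulVec_smul, hMp]
    simp only [sub_dotProduct, dotProduct_sub, smul_dotProduct, dotProduct_smul,
      smul_eq_mul]
    have s1' : p ⬝ᵥ (M *ᵥ (y - μ)) = y ⬝ᵥ (U *ᵥ w) - μ ⬝ᵥ (U *ᵥ w) := by
      rw [s1, sub_dotProduct]
    linear_combination (-2 : ℝ) * s1'
  have s2 : w ⬝ᵥ (U *ᵥ p) = p ⬝ᵥ (U *ᵥ w) := dot_symm' hUsym w p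
  have e2 : w ⬝ᵥ (((1 - (2 : ℝ) • (U * S))⁻¹ * U) *ᵥ w)
      = w ⬝ᵥ (U *ᵥ w) + 2 * (p ⬝ᵥ (U *ᵥ w)) := by
    rw [hC, add_mulVec, dotProduct_add, smul_mulVec, dotProduct_smul, smul_eq_mul,
      ← mulVec_mulVec, ← mulVec_mulVec, ← hp, s2]
  rw [e1, e2, e3, e4]
  simp only [sub_dotProduct, dotProduct_sub]
  ring
end

section
/- Let d ≥ 1, let A ∈ ℝ^{d×d} be symmetric and invertible, let q ∈ ℝ^{d×d} be symmetric positive semidefinite with positive semidefinite square root q^{1/2}, let B, m₀ ∈ ℝ^d and C ∈ ℝ, and assume that I_d − 2 q^{1/2} A q^{1/2} is positive definite. Set K := I_d − 2Aq and a := 2Am₀ + B. Then K is invertible with det K > 0, and ∫_{ℝ^d} exp( (m₀ + q^{1/2}x)ᵀ A (m₀ + q^{1/2}x) + Bᵀ(m₀ + q^{1/2}x) + C ) · (2π)^{−d/2} exp(−‖x‖²/2) dx = exp( m₀ᵀAm₀ + Bᵀm₀ + C ) · (det K)^{−1/2} · exp( (1/2) aᵀ q K⁻¹ a ). -/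
/-!
Substituting `μ₀ = m₀ + q^{1/2} x`, the exponent plus the log of the Gaussian density is
`const + b ⬝ x - xᵀ M x / 2` with `M = I - 2 q^{1/2} A q^{1/2}` and `b = q^{1/2} a`.
Translating `x` by `M⁻¹ b` completes the square, and the substitution `y = S x` with `SᵀS = M`
reduces the remaining integral to the standard Gaussian one; altogether the integral is
`(2π)^{d/2} (det M)^{-1/2} exp (bᵀ M⁻¹ b / 2)`. Finally `det M = det K` by Sylvester's determinant
identity, and `q^{1/2} M⁻¹ q^{1/2} = q K⁻¹` because `q^{1/2} K = M q^{1/2}`.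
-/

open MeasureTheory Matrix Real

namespace Matrix

variable {ι α : Type*} [Fintype ι]

theorem IsSymm.dotProduct_mulVec_comm [CommSemiring α] {M : Matrix ι ι α} (hM : M.IsSymm)
    (u v : ι → α) : u ⬝ᵥ (M *ᵥ v) = v ⬝ᵥ (M *ᵥ u) := by
  rw [dotProduct_mulVec, ← mulVec_transpose, hM.eq, dotProduct_comm]

theorem det_one_sub_smul_mul_mul_self [CommRing α] [DecidableEq ι] (R A : Matrix ι ι α) (t : α) :
    det (1 - t • (R * A * R)) = det (1 - t • (A * (R * R))) := by
  simpa [mul_smul_comm, smul_mul_assoc, Matrix.mul_assoc] using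
    det_one_sub_mul_comm R (t • (A * R))

theorem inv_mul_eq_mul_inv_of_mul_eq_mul [CommRing α] [DecidableEq ι] {M K R : Matrix ι ι α}
    (hM : IsUnit M.det) (hK : IsUnit K.det) (h : R * K = M * R) : M⁻¹ * R = R * K⁻¹ :=
  calc M⁻¹ * R = M⁻¹ * (R * K) * K⁻¹ := by
        rw [Matrix.mul_assoc, Matrix.mul_assoc, mul_nonsing_inv _ hK, Matrix.mul_one]
    _ = R * K⁻¹ := by rw [h, ← Matrix.mul_assoc, nonsing_inv_mul _ hM, Matrix.one_mul]

theorem quadratic_comp_affine_add_neg_sq_div_two [DecidableEq ι] {A R : Matrix ι ι ℝ}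
    (hA : A.IsSymm) (hR : R.IsSymm) (m B x : ι → ℝ) (C : ℝ) :
    (m + R *ᵥ x) ⬝ᵥ (A *ᵥ (m + R *ᵥ x)) + B ⬝ᵥ (m + R *ᵥ x) + C + -(x ⬝ᵥ x) / 2 =
      (m ⬝ᵥ (A *ᵥ m) + B ⬝ᵥ m + C) +
        ((R *ᵥ ((2 : ℝ) • (A *ᵥ m) + B)) ⬝ᵥ x - x ⬝ᵥ ((1 - (2 : ℝ) • (R * A * R)) *ᵥ x) / 2) := by
  have hRAR : x ⬝ᵥ ((R * A * R) *ᵥ x) = (R *ᵥ x) ⬝ᵥ (A *ᵥ (R *ᵥ x)) := by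
    rw [← mulVec_mulVec, ← mulVec_mulVec, hR.dotProduct_mulVec_comm, dotProduct_comm]
  have hlin : (R *ᵥ ((2 : ℝ) • (A *ᵥ m) + B)) ⬝ᵥ x
      = 2 * (m ⬝ᵥ (A *ᵥ (R *ᵥ x))) + B ⬝ᵥ (R *ᵥ x) := by
    rw [dotProduct_comm, hR.dotProduct_mulVec_comm, add_dotProduct, smul_dotProduct, smul_eq_mul,
      dotProduct_comm (A *ᵥ m), hA.dotProduct_mulVec_comm]
  rw [hlin, sub_mulVec, one_mulVec, smul_mulVec, dotProduct_sub, dotProduct_smul, smul_eq_mul,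
    hRAR]
  simp only [mulVec_add, dotProduct_add, add_dotProduct]
  rw [hA.dotProduct_mulVec_comm (R *ᵥ x) m]
  ring

end Matrix

section Gaussian

variable {ι : Type*} [Fintype ι]

theorem integral_comp_mulVec {E : Type*} [NormedAddCommGroup E] [NormedSpace ℝ E] [DecidableEq ι]
    {S : Matrix ι ι ℝ} (hS : S.det ≠ 0) (g : (ι → ℝ) → E) :
    ∫ x, g (S *ᵥ x) = |S.det|⁻¹ • ∫ y, g y := by
  have hS' : LinearMap.det (toLin' S) ≠ 0 := by rwa [LinearMap.det_toLin']
  let e := ((toLin' S).equivOfDetNeZero hS').toContinuousLinearEquiv.toHomeomorph.toMeasurableEquiv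
  have hmap : Measure.map e volume = ENNReal.ofReal |S.det⁻¹| • volume := by
    rw [← LinearMap.det_toLin' S]
    exact Real.map_linearMap_volume_pi_eq_smul_volume_pi hS'
  have he : ∀ x, e x = S *ᵥ x := fun x => rfl
  simp_rw [← he]
  rw [← integral_map_equiv e g, hmap, integral_smul_measure, ENNReal.toReal_ofReal (abs_nonneg _),
    abs_inv]

theorem integral_exp_neg_dotProduct_self_div_two :
    ∫ x : ι → ℝ, exp (-(x ⬝ᵥ x) / 2) = (2 * π) ^ ((Fintype.card ι : ℝ) / 2) := by
  have hprod : ∀ x : ι → ℝ, exp (-(x ⬝ᵥ x) / 2) = ∏ i, exp (-(x i * x i) / 2) := by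
    intro x
    rw [← exp_sum, dotProduct, ← Finset.sum_div, ← Finset.sum_neg_distrib]
  have hline : ∫ t : ℝ, exp (-(t * t) / 2) = (2 * π) ^ (1 / 2 : ℝ) := by
    simp_rw [← sq, neg_div, div_eq_inv_mul, ← neg_mul]
    rw [integral_gaussian, sqrt_eq_rpow]
    ring_nf
  simp_rw [hprod]
  rw [volume_pi, integral_fintype_prod_eq_pow (fun t : ℝ => exp (-(t * t) / 2)), hline,
    ← rpow_natCast, ← rpow_mul (by positivity)]
  ring_nf

open scoped MatrixOrder in
theorem Matrix.PosDef.integral_exp_neg_dotProduct_mulVec_div_two [DecidableEq ι]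
    {M : Matrix ι ι ℝ} (hM : M.PosDef) :
    ∫ x, exp (-(x ⬝ᵥ (M *ᵥ x)) / 2) =
      (2 * π) ^ ((Fintype.card ι : ℝ) / 2) * M.det ^ (-(1 : ℝ) / 2) := by
  have hdet := hM.det_pos
  obtain ⟨S, rfl⟩ := CStarAlgebra.nonneg_iff_eq_star_mul_self.mp hM.posSemidef.nonneg
  have hSdet : (star S * S).det = |S.det| ^ 2 := by
    rw [sq_abs, det_mul, star_eq_conjTranspose, det_conjTranspose, star_trivial, sq]
  have hS : S.det ≠ 0 := by
    rintro h
    simp [hSdet, h] at hdet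
  have hquad : ∀ x, x ⬝ᵥ ((star S * S) *ᵥ x) = (S *ᵥ x) ⬝ᵥ (S *ᵥ x) := fun x => by
    rw [← mulVec_mulVec, dotProduct_mulVec, star_eq_conjTranspose,
      conjTranspose_eq_transpose_of_trivial, vecMul_transpose]
  simp_rw [hquad]
  rw [integral_comp_mulVec hS (fun y => exp (-(y ⬝ᵥ y) / 2)),
    integral_exp_neg_dotProduct_self_div_two, hSdet, ← rpow_natCast,
    ← rpow_mul (abs_nonneg _), smul_eq_mul, mul_comm]
  norm_num [rpow_neg_one]

theorem Matrix.PosDef.integral_exp_dotProduct_sub_dotProduct_mulVec_div_two [DecidableEq ι]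
    {M : Matrix ι ι ℝ} (hM : M.PosDef) (b : ι → ℝ) :
    ∫ x, exp (b ⬝ᵥ x - x ⬝ᵥ (M *ᵥ x) / 2) =
      (2 * π) ^ ((Fintype.card ι : ℝ) / 2) * M.det ^ (-(1 : ℝ) / 2) *
        exp (b ⬝ᵥ (M⁻¹ *ᵥ b) / 2) := by
  set c := M⁻¹ *ᵥ b
  have hMc : M *ᵥ c = b := by
    rw [mulVec_mulVec, mul_nonsing_inv _ hM.det_pos.ne'.isUnit, one_mulVec]
  have hsymm : M.IsSymm := isHermitian_iff_isSymm.mp hM.isHermitian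
  have hshift : ∀ x, b ⬝ᵥ (x + c) - (x + c) ⬝ᵥ (M *ᵥ (x + c)) / 2
      = b ⬝ᵥ c / 2 + -(x ⬝ᵥ (M *ᵥ x)) / 2 := fun x => by
    simp only [mulVec_add, dotProduct_add, add_dotProduct]
    rw [hsymm.dotProduct_mulVec_comm c x, hMc, dotProduct_comm x b, dotProduct_comm c b]
    ring
  rw [← integral_add_right_eq_self _ c]
  simp_rw [hshift, exp_add, integral_const_mul, hM.integral_exp_neg_dotProduct_mulVec_div_two]
  ring

end Gaussian

theorem stmt_7_general (d : ℕ)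
    (A q R : Matrix (Fin d) (Fin d) ℝ)
    (hA : A.IsSymm)
    (hR : R.PosSemidef) (hRq : R * R = q)
    (B m₀ : Fin d → ℝ) (C : ℝ)
    (hpd : (1 - (2 : ℝ) • (R * A * R)).PosDef)
    (K : Matrix (Fin d) (Fin d) ℝ) (hK : K = 1 - (2 : ℝ) • (A * q))
    (a : Fin d → ℝ) (ha : a = (2 : ℝ) • (A *ᵥ m₀) + B) :
    IsUnit K ∧ 0 < K.det ∧
      ∫ x : Fin d → ℝ,
          Real.exp ((m₀ + R *ᵥ x) ⬝ᵥ (A *ᵥ (m₀ + R *ᵥ x)) + B ⬝ᵥ (m₀ + R *ᵥ x) + C) *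
            ((2 * Real.pi) ^ (-(d : ℝ) / 2) * Real.exp (-(x ⬝ᵥ x) / 2))
        = Real.exp (m₀ ⬝ᵥ (A *ᵥ m₀) + B ⬝ᵥ m₀ + C) * K.det ^ (-(1 : ℝ) / 2) *
            Real.exp ((1 / 2) * (a ⬝ᵥ ((q * K⁻¹) *ᵥ a))) := by
  set M := 1 - (2 : ℝ) • (R * A * R) with hM
  have hRsymm : R.IsSymm := isHermitian_iff_isSymm.mp hR.isHermitian
  have hdet : M.det = K.det := by rw [hK, ← hRq, det_one_sub_smul_mul_mul_self]
  have hKdet : 0 < K.det := hdet ▸ hpd.det_pos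
  have hquad : a ⬝ᵥ ((q * K⁻¹) *ᵥ a) = (R *ᵥ a) ⬝ᵥ (M⁻¹ *ᵥ (R *ᵥ a)) := by
    have hRK : R * K = M * R := by
      rw [hK, ← hRq]
      simp only [M, Matrix.mul_sub, Matrix.sub_mul, Matrix.mul_one, Matrix.one_mul,
        Matrix.mul_smul, Matrix.smul_mul, Matrix.mul_assoc]
    rw [← hRq, Matrix.mul_assoc, ← inv_mul_eq_mul_inv_of_mul_eq_mul hpd.det_pos.ne'.isUnit
      hKdet.ne'.isUnit hRK, ← mulVec_mulVec, ← mulVec_mulVec, hRsymm.dotProduct_mulVec_comm,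
      dotProduct_comm]
  refine ⟨(isUnit_iff_isUnit_det K).2 hKdet.ne'.isUnit, hKdet, ?_⟩
  simp_rw [mul_left_comm (Real.exp _) ((2 * π) ^ (-(d : ℝ) / 2)), ← exp_add,
    quadratic_comp_affine_add_neg_sq_div_two hA hRsymm, ← ha, ← hM,
    exp_add (m₀ ⬝ᵥ (A *ᵥ m₀) + B ⬝ᵥ m₀ + C), integral_const_mul,
    hpd.integral_exp_dotProduct_sub_dotProduct_mulVec_div_two, hdet, hquad, Fintype.card_fin,
    one_div_mul_eq_div]
  have hnorm : (2 * π) ^ (-(d : ℝ) / 2) * (2 * π) ^ ((d : ℝ) / 2) = 1 := by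
    rw [← rpow_add (by positivity), neg_div, neg_add_cancel, rpow_zero]
  linear_combination (exp (m₀ ⬝ᵥ (A *ᵥ m₀) + B ⬝ᵥ m₀ + C) * K.det ^ (-(1 : ℝ) / 2) *
    exp ((R *ᵥ a) ⬝ᵥ (M⁻¹ *ᵥ (R *ᵥ a)) / 2)) * hnorm

/-- Conditional expectation of `exp(μ₀ᵀAμ₀ + Bᵀμ₀ + C)` for Gaussian `μ₀ = m₀ + q^{1/2}·ε`
with `ε` standard Gaussian, expressed as an integral against the standard Gaussian density. -/
theorem stmt_7 (d : ℕ) (hd : 1 ≤ d)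
    (A q R : Matrix (Fin d) (Fin d) ℝ)
    (hA : A.IsSymm) (hAunit : IsUnit A)
    (hq : q.PosSemidef) (hR : R.PosSemidef) (hRq : R * R = q)
    (B m₀ : Fin d → ℝ) (C : ℝ)
    (hpd : (1 - (2 : ℝ) • (R * A * R)).PosDef)
    (K : Matrix (Fin d) (Fin d) ℝ) (hK : K = 1 - (2 : ℝ) • (A * q))
    (a : Fin d → ℝ) (ha : a = (2 : ℝ) • (A *ᵥ m₀) + B) :
    IsUnit K ∧ 0 < K.det ∧
      ∫ x : Fin d → ℝ,
          Real.exp ((m₀ + R *ᵥ x) ⬝ᵥ (A *ᵥ (m₀ + R *ᵥ x)) + B ⬝ᵥ (m₀ + R *ᵥ x) + C) *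
            ((2 * Real.pi) ^ (-(d : ℝ) / 2) * Real.exp (-(x ⬝ᵥ x) / 2))
        = Real.exp (m₀ ⬝ᵥ (A *ᵥ m₀) + B ⬝ᵥ m₀ + C) * K.det ^ (-(1 : ℝ) / 2) *
            Real.exp ((1 / 2) * (a ⬝ᵥ ((q * K⁻¹) *ᵥ a))) :=
  stmt_7_general d A q R hA hR hRq B m₀ C hpd K hK a ha
end

section
/- Let θ ∈ (0,1), ψ = θ/(2(1−θ)²), and let κ, σ_μ, σ_R > 0 be such that Δ_ψ := 4κ²(1 − 2ψ(σ_μ/(κσ_R))²) ≥ 0. Then for every T > 0 there exists a differentiable function A : [0,T] → ℝ with A(T) = 0 and A′(t) = −2σ_μ² A(t)² + 2κ A(t) − ψ/σ_R² for all t ∈ [0,T]; in particular this solution is bounded on [0,T]. -/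
/-!
With `a = −2σ_μ²` and `c = ψ/σ_R²` the equation reads `A' = a A² + 2κA − c`, and for `κ ≠ 0` the
discriminant is `Δ_ψ = 4(κ² + ac)`. The substitution `A = −u' / (a u)` linearises it into
`u'' − 2κu' − ac u = 0`, whose characteristic exponents are `κ ± √(κ² + ac)`. In the backward time
`s = T − t` this gives the closed form `A = c S / (C + κ S)`, where `S'' = (κ² + ac) S`, `S(0) = 0`,
`C = S'`: explicitly `S = sinh (λs) / λ`, `C = cosh (λs)` when `λ² = κ² + ac > 0`, and `S = s`,
`C = 1` in the double-root case. For `s ≥ 0` and `κ ≥ 0` the denominator is at least `1`, so the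
solution exists on all of `[0, T]`, and it is bounded there by compactness.
-/

open Real Set

section Riccati

variable {a κ c : ℝ}

lemma hasDerivAt_riccati_quotient {S C : ℝ → ℝ} {s : ℝ}
    (hS : HasDerivAt S (C s) s) (hC : HasDerivAt C ((κ ^ 2 + a * c) * S s) s)
    (hD : C s + κ * S s ≠ 0) :
    HasDerivAt (fun s => c * S s / (C s + κ * S s))
      (-(a * (c * S s / (C s + κ * S s)) ^ 2 + 2 * κ * (c * S s / (C s + κ * S s)) - c)) s := by
  refine ((hS.const_mul c).div (hC.fun_add (hS.const_mul κ)) hD).congr_deriv ?_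
  field_simp
  ring

lemma exists_sinh_cosh_pair {μ : ℝ} (hμ : 0 ≤ μ) :
    ∃ S C : ℝ → ℝ, S 0 = 0 ∧ (∀ s, HasDerivAt S (C s) s) ∧
      (∀ s, HasDerivAt C (μ * S s) s) ∧ ∀ s, 0 ≤ s → 0 ≤ S s ∧ 1 ≤ C s := by
  rcases hμ.eq_or_lt with rfl | hμ
  · exact ⟨id, fun _ => 1, rfl, hasDerivAt_id, fun s => by simpa using hasDerivAt_const s (1 : ℝ),
      fun s hs => ⟨hs, le_rfl⟩⟩
  set l := √μ
  have hl : 0 < l := sqrt_pos.2 hμ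
  refine ⟨fun s => sinh (l * s) / l, fun s => cosh (l * s), by simp, fun s => ?_, fun s => ?_,
    fun s hs => ⟨div_nonneg (sinh_nonneg_iff.2 (by positivity)) hl.le, one_le_cosh _⟩⟩
  · refine (((hasDerivAt_id' s).const_mul l).sinh.div_const l).congr_deriv ?_
    field_simp
  · refine ((hasDerivAt_id' s).const_mul l).cosh.congr_deriv ?_
    rw [show μ = l ^ 2 from (sq_sqrt hμ.le).symm]
    field_simp

theorem exists_riccati_solution (hκ : 0 ≤ κ) (hdisc : 0 ≤ κ ^ 2 + a * c) (T : ℝ) :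
    ∃ A : ℝ → ℝ, A T = 0 ∧ ∀ t ≤ T, HasDerivAt A (a * A t ^ 2 + 2 * κ * A t - c) t := by
  obtain ⟨S, C, hS0, hS, hC, hSC⟩ := exists_sinh_cosh_pair hdisc
  refine ⟨fun t => c * S (T - t) / (C (T - t) + κ * S (T - t)), by simp [hS0], fun t ht => ?_⟩
  obtain ⟨hSnn, hC1⟩ := hSC (T - t) (sub_nonneg.2 ht)
  have hD : C (T - t) + κ * S (T - t) ≠ 0 := by positivity
  have hback := hasDerivAt_riccati_quotient (hS (T - t)) (hC (T - t)) hD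
  refine (hback.comp t ((hasDerivAt_id t).const_sub T)).congr_deriv ?_
  ring

end Riccati

theorem stmt_11_general (ψ κ σμ σR : ℝ)
    (hκ : 0 < κ)
    (hΔ : 4 * κ ^ 2 * (1 - 2 * ψ * (σμ / (κ * σR)) ^ 2) ≥ 0) :
    ∀ T > (0 : ℝ), ∃ A : ℝ → ℝ,
      A T = 0 ∧
      (∀ t ∈ Set.Icc 0 T,
        HasDerivWithinAt A (-2 * σμ ^ 2 * A t ^ 2 + 2 * κ * A t - ψ / σR ^ 2)
          (Set.Icc 0 T) t) ∧
      ∃ M : ℝ, ∀ t ∈ Set.Icc 0 T, |A t| ≤ M := by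
  intro T _
  have hdisc : 0 ≤ κ ^ 2 + -2 * σμ ^ 2 * (ψ / σR ^ 2) := by
    have hΔ_eq : 4 * κ ^ 2 * (1 - 2 * ψ * (σμ / (κ * σR)) ^ 2) =
        4 * (κ ^ 2 + -2 * σμ ^ 2 * (ψ / σR ^ 2)) := by
      rw [div_pow, mul_pow, ← div_div]
      field_simp
      ring
    linarith
  obtain ⟨A, hAT, hA⟩ := exists_riccati_solution hκ.le hdisc T
  have hderiv : ∀ t ∈ Icc 0 T, HasDerivWithinAt A
      (-2 * σμ ^ 2 * A t ^ 2 + 2 * κ * A t - ψ / σR ^ 2) (Icc 0 T) t :=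
    fun t ht => (hA t ht.2).hasDerivWithinAt
  obtain ⟨M, hM⟩ := isCompact_Icc.exists_bound_of_continuousOn
    fun t ht => (hderiv t ht).continuousWithinAt
  exact ⟨A, hAT, hderiv, M, hM⟩

/-- If `Δ_ψ ≥ 0`, the Riccati terminal value problem
`A'(t) = −2σ_μ²A(t)² + 2κA(t) − ψ/σ_R²`, `A(T) = 0` has a (bounded) solution on `[0,T]`
for every horizon `T > 0`. -/
theorem stmt_11 (θ ψ κ σμ σR : ℝ) (hθ : θ ∈ Set.Ioo (0 : ℝ) 1)
    (hψ : ψ = θ / (2 * (1 - θ) ^ 2))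
    (hκ : 0 < κ) (hσμ : 0 < σμ) (hσR : 0 < σR)
    (hΔ : 4 * κ ^ 2 * (1 - 2 * ψ * (σμ / (κ * σR)) ^ 2) ≥ 0) :
    ∀ T > (0 : ℝ), ∃ A : ℝ → ℝ,
      A T = 0 ∧
      (∀ t ∈ Set.Icc 0 T,
        HasDerivWithinAt A (-2 * σμ ^ 2 * A t ^ 2 + 2 * κ * A t - ψ / σR ^ 2)
          (Set.Icc 0 T) t) ∧
      ∃ M : ℝ, ∀ t ∈ Set.Icc 0 T, |A t| ≤ M :=
  stmt_11_general ψ κ σμ σR hκ hΔ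
end

section
/- Let θ ∈ (0,1), ψ = θ/(2(1−θ)²), and let κ, σ_μ, σ_R > 0 be such that Δ_ψ := 4κ²(1 − 2ψ(σ_μ/(κσ_R))²) < 0. Set δ_ψ := (1/2)√(−Δ_ψ) and T^E := (1/δ_ψ)(π/2 + arctan(κ/δ_ψ)). Then for T > 0 there exists a differentiable function A : [0,T] → ℝ with A(T) = 0 and A′(t) = −2σ_μ² A(t)² + 2κ A(t) − ψ/σ_R² for all t ∈ [0,T] if and only if T < T^E. -/
/-!
With `δ² = a c - κ²` the substitution `u = (a A - κ) / δ` turns `A' = -a A² + 2κ A - c` into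
`u' = -δ (1 + u²)`, so `arctan u + δ t` is constant along any solution. Since `A(T) = 0` gives
`u(T) = -κ/δ`, a solution on `[0, T]` forces `arctan u(0) = δ T - arctan (κ/δ)`, which must
stay below `π/2`. Conversely, inverting the substitution gives the explicit solution
`A(t) = (κ + δ tan (δ (T - t) - arctan (κ/δ))) / a`, defined on `[0, T]` exactly when
`δ T < π/2 + arctan (κ/δ)`.
-/

open Real Set

section Riccati

variable {a κ c δ T : ℝ}

theorem hasDerivWithinAt_arctan_riccati {A : ℝ → ℝ} {s : Set ℝ} {t : ℝ} (hδ : δ ≠ 0)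
    (hδsq : δ ^ 2 = a * c - κ ^ 2)
    (hA : HasDerivWithinAt A (-a * A t ^ 2 + 2 * κ * A t - c) s t) :
    HasDerivWithinAt (fun t => arctan ((a * A t - κ) / δ) + δ * t) 0 s t := by
  have hu := ((hA.const_mul a).sub_const κ).div_const δ
  have h := (hasDerivAt_arctan _).comp_hasDerivWithinAt t hu |>.add
    ((hasDerivAt_id t).const_mul δ).hasDerivWithinAt
  refine h.congr_deriv ?_
  have : (1 : ℝ) + ((a * A t - κ) / δ) ^ 2 ≠ 0 := by positivity
  field_simp
  linear_combination δ * hδsq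

theorem riccati_lifespan_lt {A : ℝ → ℝ} (hδ : 0 < δ) (hδsq : δ ^ 2 = a * c - κ ^ 2)
    (hT : 0 ≤ T) (hAT : A T = 0)
    (hA : ∀ t ∈ Icc 0 T, HasDerivWithinAt A (-a * A t ^ 2 + 2 * κ * A t - c) (Icc 0 T) t) :
    δ * T < π / 2 + arctan (κ / δ) := by
  set g : ℝ → ℝ := fun t => arctan ((a * A t - κ) / δ) + δ * t
  have hg : ∀ t ∈ Icc 0 T, HasDerivWithinAt g 0 (Icc 0 T) t := fun t ht =>
    hasDerivWithinAt_arctan_riccati hδ.ne' hδsq (hA t ht)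
  have hconst : g T = g 0 := constant_of_has_deriv_right_zero
    (fun t ht => (hg t ht).continuousWithinAt)
    (fun t ht => (hg t (Ico_subset_Icc_self ht)).mono_of_mem_nhdsWithin
      (Icc_mem_nhdsGE_of_mem ht)) T (right_mem_Icc.mpr hT)
  have hgT : g T = -arctan (κ / δ) + δ * T := by
    simp only [g, hAT, mul_zero, zero_sub, neg_div, arctan_neg]
  have hg0 : g 0 = arctan ((a * A 0 - κ) / δ) := by simp [g]
  linarith [arctan_lt_pi_div_two ((a * A 0 - κ) / δ)]

noncomputable def riccatiTanSolution (a κ δ T t : ℝ) : ℝ :=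
  (κ + δ * tan (δ * (T - t) - arctan (κ / δ))) / a

theorem riccatiTanSolution_self (hδ : δ ≠ 0) : riccatiTanSolution a κ δ T T = 0 := by
  simp [riccatiTanSolution, mul_div_cancel₀ κ hδ]

theorem hasDerivAt_riccatiTanSolution {t : ℝ} (ha : a ≠ 0) (hδsq : δ ^ 2 = a * c - κ ^ 2)
    (hcos : cos (δ * (T - t) - arctan (κ / δ)) ≠ 0) :
    HasDerivAt (riccatiTanSolution a κ δ T)
      (-a * riccatiTanSolution a κ δ T t ^ 2 + 2 * κ * riccatiTanSolution a κ δ T t - c) t := by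
  have hinner : HasDerivAt (fun s => δ * (T - s) - arctan (κ / δ)) (-δ) t := by
    simpa using (((hasDerivAt_id t).const_sub T).const_mul δ).sub_const (arctan (κ / δ))
  have h := ((((hasDerivAt_tan hcos).comp t hinner).const_mul δ).const_add κ).div_const a
  refine h.congr_deriv ?_
  rw [one_div, ← inv_one_add_tan_sq hcos, inv_inv]
  simp only [riccatiTanSolution]
  field_simp
  linear_combination -hδsq

theorem hasDerivAt_riccatiTanSolution_of_mem_Icc {t : ℝ} (ha : a ≠ 0) (hδ : 0 < δ)
    (hδsq : δ ^ 2 = a * c - κ ^ 2) (hT : δ * T < π / 2 + arctan (κ / δ)) (ht : t ∈ Icc 0 T) :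
    HasDerivAt (riccatiTanSolution a κ δ T)
      (-a * riccatiTanSolution a κ δ T t ^ 2 + 2 * κ * riccatiTanSolution a κ δ T t - c) t := by
  refine hasDerivAt_riccatiTanSolution ha hδsq (cos_pos_of_mem_Ioo ⟨?_, ?_⟩).ne'
  · nlinarith [arctan_lt_pi_div_two (κ / δ), ht.2]
  · nlinarith [ht.1]

end Riccati

theorem stmt_12_general (ψ κ σμ σR T : ℝ)
    (hκ : 0 < κ) (hσμ : 0 < σμ) (hT : 0 < T)
    (hΔ : 4 * κ ^ 2 * (1 - 2 * ψ * (σμ / (κ * σR)) ^ 2) < 0)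
    (δ : ℝ) (hδ : δ = (1 / 2) * Real.sqrt (-(4 * κ ^ 2 * (1 - 2 * ψ * (σμ / (κ * σR)) ^ 2))))
    (TE : ℝ) (hTE : TE = (1 / δ) * (Real.pi / 2 + Real.arctan (κ / δ))) :
    (∃ A : ℝ → ℝ,
        A T = 0 ∧
        ∀ t ∈ Set.Icc 0 T,
          HasDerivWithinAt A (-2 * σμ ^ 2 * A t ^ 2 + 2 * κ * A t - ψ / σR ^ 2)
            (Set.Icc 0 T) t) ↔
      T < TE := by
  have hδpos : 0 < δ := by rw [hδ]; exact mul_pos one_half_pos (sqrt_pos.2 (by linarith))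
  have hδsq : δ ^ 2 = 2 * σμ ^ 2 * (ψ / σR ^ 2) - κ ^ 2 := by
    rw [hδ, mul_pow, sq_sqrt (by linarith)]
    field_simp
    ring
  have hσμ2 : 2 * σμ ^ 2 ≠ 0 := by positivity
  have hrhs (A : ℝ → ℝ) (t : ℝ) : -2 * σμ ^ 2 * A t ^ 2 + 2 * κ * A t - ψ / σR ^ 2 =
      -(2 * σμ ^ 2) * A t ^ 2 + 2 * κ * A t - ψ / σR ^ 2 := by ring
  simp only [hrhs]
  rw [hTE, one_div, ← div_eq_inv_mul, lt_div_iff₀' hδpos]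
  constructor
  · rintro ⟨A, hAT, hA⟩
    exact riccati_lifespan_lt hδpos hδsq hT.le hAT hA
  · intro hlt
    exact ⟨riccatiTanSolution (2 * σμ ^ 2) κ δ T, riccatiTanSolution_self hδpos.ne',
      fun t ht =>
        (hasDerivAt_riccatiTanSolution_of_mem_Icc hσμ2 hδpos hδsq hlt ht).hasDerivWithinAt⟩

/-- If `Δ_ψ < 0`, the Riccati terminal value problem
`A'(t) = −2σ_μ²A(t)² + 2κA(t) − ψ/σ_R²`, `A(T) = 0` has a solution on `[0,T]`
if and only if `T` is smaller than the explosion time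
`T^E = (1/δ_ψ)(π/2 + arctan(κ/δ_ψ))` where `δ_ψ = (1/2)√(−Δ_ψ)`. -/
theorem stmt_12 (θ ψ κ σμ σR T : ℝ) (hθ : θ ∈ Set.Ioo (0 : ℝ) 1)
    (hψ : ψ = θ / (2 * (1 - θ) ^ 2))
    (hκ : 0 < κ) (hσμ : 0 < σμ) (hσR : 0 < σR) (hT : 0 < T)
    (hΔ : 4 * κ ^ 2 * (1 - 2 * ψ * (σμ / (κ * σR)) ^ 2) < 0)
    (δ : ℝ) (hδ : δ = (1 / 2) * Real.sqrt (-(4 * κ ^ 2 * (1 - 2 * ψ * (σμ / (κ * σR)) ^ 2))))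
    (TE : ℝ) (hTE : TE = (1 / δ) * (Real.pi / 2 + Real.arctan (κ / δ))) :
    (∃ A : ℝ → ℝ,
        A T = 0 ∧
        ∀ t ∈ Set.Icc 0 T,
          HasDerivWithinAt A (-2 * σμ ^ 2 * A t ^ 2 + 2 * κ * A t - ψ / σR ^ 2)
            (Set.Icc 0 T) t) ↔
      T < TE :=
  stmt_12_general ψ κ σμ σR T hκ hσμ hT hΔ δ hδ TE hTE
end

section
/- Let d ≥ 1, T > 0, let κ ∈ ℝ^{d×d}, μ̄ ∈ ℝ^d, let Σ_μ ∈ ℝ^{d×d} be symmetric, let Σ_R ∈ ℝ^{d×d} be symmetric positive definite, let ψ ∈ ℝ, and let A : [0,T] → ℝ^{d×d} with A(t) symmetric for every t, B : [0,T] → ℝ^d and C : [0,T] → ℝ be differentiable functions satisfying on [0,T]: A′(t) = −2A(t)Σ_μA(t) + κᵀA(t) + A(t)κ − ψΣ_R⁻¹ with A(T) = 0; B′(t) = −2A(t)κμ̄ + (κᵀ − 2A(t)Σ_μ)B(t) with B(T) = 0; C′(t) = −(1/2)B(t)ᵀΣ_μB(t) − B(t)ᵀκμ̄ − tr(Σ_μA(t))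 with C(T) = 0. Define d(t,m) := exp( mᵀA(t)m + B(t)ᵀm + C(t) ) for t ∈ [0,T], m ∈ ℝ^d. Then d(T,m) = 1 for all m, and for all t ∈ [0,T] and m ∈ ℝ^d, ∂_t d(t,m) + (∇_m d(t,m))ᵀ κ(μ̄ − m) + (1/2) tr( Σ_μ ∇²_m d(t,m) ) + ψ mᵀΣ_R⁻¹m · d(t,m) = 0. -/
/-!
Write `d = exp q` with `q(t, m) = mᵀA(t)m + B(t)ᵀm + C(t)`. Then `∂ₜd = d ∂ₜq`, `∇d = d ∇q` and
`∇²d = d (∇q ∇qᵀ + ∇²q)`, where `∇q = (A + Aᵀ)m + B` and `∇²q = A + Aᵀ`. After dividing by `d`, the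
equation is a quadratic polynomial in `m`. The Riccati equations for `A`, `B` and `C` say exactly
that its quadratic, linear and constant coefficients vanish.
-/

open Matrix

section

variable {ι : Type*} [Fintype ι]

noncomputable def dotProductCLM : (ι → ℝ) →L[ℝ] (ι → ℝ) →L[ℝ] ℝ :=
  (dotProductBilin ℝ ℝ : (ι → ℝ) →ₗ[ℝ] (ι → ℝ) →ₗ[ℝ] ℝ).toContinuousBilinearMap

@[simp]
theorem dotProductCLM_apply (v w : ι → ℝ) : dotProductCLM v w = v ⬝ᵥ w := rfl

theorem dotProduct_mulVec_eq_transpose_mulVec (M : Matrix ι ι ℝ) (v w : ι → ℝ) :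
    v ⬝ᵥ (M *ᵥ w) = (Mᵀ *ᵥ v) ⬝ᵥ w := by
  rw [dotProduct_mulVec, mulVec_transpose]

theorem hasFDerivAt_dotProduct_mulVec_self (M : Matrix ι ι ℝ) (m : ι → ℝ) :
    HasFDerivAt (fun v => v ⬝ᵥ (M *ᵥ v)) (dotProductCLM ((M + Mᵀ) *ᵥ m)) m := by
  have hM : HasFDerivAt (M *ᵥ ·) (LinearMap.toContinuousLinearMap M.mulVecLin) m :=
    (LinearMap.toContinuousLinearMap M.mulVecLin).hasFDerivAt
  refine (dotProductCLM.hasFDerivAt_of_bilinear (hasFDerivAt_id m) hM).congr_fderiv ?_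
  ext w
  simp [add_mulVec, dotProduct_mulVec_eq_transpose_mulVec, dotProduct_comm w, add_comm]

noncomputable def expQuadratic (a : Matrix ι ι ℝ) (b : ι → ℝ) (c : ℝ) (v : ι → ℝ) : ℝ :=
  Real.exp (v ⬝ᵥ (a *ᵥ v) + b ⬝ᵥ v + c)

theorem hasFDerivAt_expQuadratic (a : Matrix ι ι ℝ) (b : ι → ℝ) (c : ℝ) (m : ι → ℝ) :
    HasFDerivAt (expQuadratic a b c)
      (expQuadratic a b c m • dotProductCLM ((a + aᵀ) *ᵥ m + b)) m := by
  refine (((hasFDerivAt_dotProduct_mulVec_self a m).add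
    (dotProductCLM b).hasFDerivAt).add_const c).exp.congr_fderiv ?_
  rw [map_add]
  rfl

theorem fderiv_expQuadratic_apply (a : Matrix ι ι ℝ) (b : ι → ℝ) (c : ℝ) (v w : ι → ℝ) :
    fderiv ℝ (expQuadratic a b c) v w = expQuadratic a b c v * (((a + aᵀ) *ᵥ v + b) ⬝ᵥ w) := by
  rw [(hasFDerivAt_expQuadratic a b c v).fderiv, _root_.smul_apply, dotProductCLM_apply,
    smul_eq_mul]

theorem fderiv_fderiv_expQuadratic_apply (a : Matrix ι ι ℝ) (b : ι → ℝ) (c : ℝ)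
    (m w w' : ι → ℝ) :
    fderiv ℝ (fun v => fderiv ℝ (expQuadratic a b c) v w) m w' =
      expQuadratic a b c m * ((((a + aᵀ) *ᵥ m + b) ⬝ᵥ w') * (((a + aᵀ) *ᵥ m + b) ⬝ᵥ w)
        + ((a + aᵀ) *ᵥ w) ⬝ᵥ w') := by
  have hgrad : HasFDerivAt (fun v => ((a + aᵀ) *ᵥ v + b) ⬝ᵥ w)
      (dotProductCLM ((a + aᵀ) *ᵥ w)) m := by
    have hsymm : ∀ v, ((a + aᵀ) *ᵥ v) ⬝ᵥ w = ((a + aᵀ) *ᵥ w) ⬝ᵥ v := fun v => by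
      rw [dotProduct_comm, dotProduct_mulVec_eq_transpose_mulVec, transpose_add,
        transpose_transpose, add_comm aᵀ]
    simpa [add_dotProduct, hsymm] using
      ((dotProductCLM ((a + aᵀ) *ᵥ w)).hasFDerivAt (x := m)).add_const (b ⬝ᵥ w)
  simp only [fderiv_expQuadratic_apply]
  rw [((hasFDerivAt_expQuadratic a b c m).fun_mul hgrad).fderiv]
  simp only [_root_.add_apply, _root_.smul_apply, dotProductCLM_apply, smul_eq_mul]
  ring

theorem trace_mul_hessian_expQuadratic [DecidableEq ι] (S a : Matrix ι ι ℝ) (b : ι → ℝ) (c : ℝ)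
    (m : ι → ℝ) :
    (S * Matrix.of fun i j =>
        fderiv ℝ (fun v => fderiv ℝ (expQuadratic a b c) v (Pi.single j 1)) m (Pi.single i 1)).trace
      = expQuadratic a b c m * ((S *ᵥ ((a + aᵀ) *ᵥ m + b)) ⬝ᵥ ((a + aᵀ) *ᵥ m + b)
        + (S * (a + aᵀ)).trace) := by
  have hhess : (Matrix.of fun i j =>
        fderiv ℝ (fun v => fderiv ℝ (expQuadratic a b c) v (Pi.single j 1)) m (Pi.single i 1))
      = expQuadratic a b c m •
        (vecMulVec ((a + aᵀ) *ᵥ m + b) ((a + aᵀ) *ᵥ m + b) + (a + aᵀ)) := by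
    ext i j
    simp [fderiv_fderiv_expQuadratic_apply, vecMulVec_apply]
  rw [hhess, Matrix.mul_smul, trace_smul, mul_add, trace_add, mul_vecMulVec, trace_vecMulVec,
    smul_eq_mul]

theorem HasDerivWithinAt.dotProduct_const {x : ℝ → ι → ℝ} {x' : ι → ℝ} {s : Set ℝ} {t : ℝ}
    (hx : ∀ i, HasDerivWithinAt (fun τ => x τ i) (x' i) s t) (w : ι → ℝ) :
    HasDerivWithinAt (fun τ => x τ ⬝ᵥ w) (x' ⬝ᵥ w) s t :=
  HasDerivWithinAt.fun_sum fun i _ => (hx i).mul_const (w i)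

theorem HasDerivWithinAt.const_dotProduct {x : ℝ → ι → ℝ} {x' : ι → ℝ} {s : Set ℝ} {t : ℝ}
    (hx : ∀ i, HasDerivWithinAt (fun τ => x τ i) (x' i) s t) (w : ι → ℝ) :
    HasDerivWithinAt (fun τ => w ⬝ᵥ x τ) (w ⬝ᵥ x') s t :=
  HasDerivWithinAt.fun_sum fun i _ => (hx i).const_mul (w i)

theorem HasDerivWithinAt.expQuadratic {A : ℝ → Matrix ι ι ℝ} {A' : Matrix ι ι ℝ}
    {B : ℝ → ι → ℝ} {B' : ι → ℝ} {C : ℝ → ℝ} {C' : ℝ} {s : Set ℝ} {t : ℝ}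
    (hA : ∀ i j, HasDerivWithinAt (fun τ => A τ i j) (A' i j) s t)
    (hB : ∀ i, HasDerivWithinAt (fun τ => B τ i) (B' i) s t) (hC : HasDerivWithinAt C C' s t)
    (m : ι → ℝ) :
    HasDerivWithinAt (fun τ => expQuadratic (A τ) (B τ) (C τ) m)
      (expQuadratic (A t) (B t) (C t) m * (m ⬝ᵥ (A' *ᵥ m) + B' ⬝ᵥ m + C')) s t := by
  have hAm := HasDerivWithinAt.const_dotProduct
    (fun i => HasDerivWithinAt.dotProduct_const (hA i) m) m
  exact ((hAm.fun_add (HasDerivWithinAt.dotProduct_const hB m)).fun_add hC).exp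

theorem riccati_generator_eq_zero (κ S R a : Matrix ι ι ℝ) (hS : S.IsSymm) (ha : a.IsSymm)
    (μ b m : ι → ℝ) (ψ : ℝ) :
    m ⬝ᵥ (((-2 : ℝ) • (a * S * a) + κᵀ * a + a * κ - ψ • R) *ᵥ m)
      + ((-2 : ℝ) • (a *ᵥ (κ *ᵥ μ)) + (κᵀ - (2 : ℝ) • (a * S)) *ᵥ b) ⬝ᵥ m
      + (-(1 / 2) * (b ⬝ᵥ (S *ᵥ b)) - b ⬝ᵥ (κ *ᵥ μ) - (S * a).trace)
      + ((a + aᵀ) *ᵥ m + b) ⬝ᵥ (κ *ᵥ (μ - m))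
      + 1 / 2 * ((S *ᵥ ((a + aᵀ) *ᵥ m + b)) ⬝ᵥ ((a + aᵀ) *ᵥ m + b) + (S * (a + aᵀ)).trace)
      + ψ * (m ⬝ᵥ (R *ᵥ m)) = 0 := by
  rw [ha.eq]
  have ha_left (x : ι → ℝ) : m ⬝ᵥ (a *ᵥ x) = (a *ᵥ m) ⬝ᵥ x := by
    rw [dotProduct_mulVec_eq_transpose_mulVec, ha.eq]
  have ha_right (x : ι → ℝ) : (a *ᵥ x) ⬝ᵥ m = (a *ᵥ m) ⬝ᵥ x := by
    rw [dotProduct_comm, ha_left]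
  have hκ_left (x : ι → ℝ) : m ⬝ᵥ (κᵀ *ᵥ x) = x ⬝ᵥ (κ *ᵥ m) := by
    rw [dotProduct_mulVec_eq_transpose_mulVec, transpose_transpose, dotProduct_comm]
  have hκ_right (x : ι → ℝ) : (κᵀ *ᵥ x) ⬝ᵥ m = x ⬝ᵥ (κ *ᵥ m) := by
    rw [dotProduct_comm, hκ_left]
  have hS_swap (x y : ι → ℝ) : (S *ᵥ x) ⬝ᵥ y = x ⬝ᵥ (S *ᵥ y) := by
    rw [dotProduct_comm, dotProduct_mulVec_eq_transpose_mulVec, hS.eq, dotProduct_comm]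
  have hSb : b ⬝ᵥ (S *ᵥ (a *ᵥ m)) = (a *ᵥ m) ⬝ᵥ (S *ᵥ b) := by rw [← hS_swap, dotProduct_comm]
  simp only [add_mulVec, sub_mulVec, smul_mulVec, ← mulVec_mulVec, mulVec_add, mulVec_sub,
    add_dotProduct, sub_dotProduct, smul_dotProduct, dotProduct_add, dotProduct_sub,
    dotProduct_smul, smul_eq_mul, Matrix.mul_add, trace_add]
  simp only [ha_left, ha_right, hκ_left, hκ_right, hS_swap, hSb]
  ring

end

theorem stmt_15_general (n : ℕ) (T : ℝ) (hT : 0 < T)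
    (κ : Matrix (Fin n) (Fin n) ℝ) (μb : Fin n → ℝ)
    (Sμ SR : Matrix (Fin n) (Fin n) ℝ)
    (hSμ : Sμ.IsSymm)
    (ψ : ℝ)
    (A : ℝ → Matrix (Fin n) (Fin n) ℝ) (B : ℝ → Fin n → ℝ) (C : ℝ → ℝ)
    (hAsym : ∀ t, (A t).IsSymm)
    (hAT : A T = 0) (hBT : B T = 0) (hCT : C T = 0)
    (hA : ∀ t ∈ Set.Icc 0 T, ∀ i j,
      HasDerivWithinAt (fun s => A s i j)
        (((-2 : ℝ) • (A t * Sμ * A t) + κᵀ * A t + A t * κ - ψ • SR⁻¹) i j)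
        (Set.Icc 0 T) t)
    (hB : ∀ t ∈ Set.Icc 0 T, ∀ i,
      HasDerivWithinAt (fun s => B s i)
        (((-2 : ℝ) • (A t *ᵥ (κ *ᵥ μb)) + (κᵀ - (2 : ℝ) • (A t * Sμ)) *ᵥ B t) i)
        (Set.Icc 0 T) t)
    (hC : ∀ t ∈ Set.Icc 0 T,
      HasDerivWithinAt C
        (-(1 / 2) * (B t ⬝ᵥ (Sμ *ᵥ B t)) - B t ⬝ᵥ (κ *ᵥ μb) - (Sμ * A t).trace)
        (Set.Icc 0 T) t)
    (dd : ℝ → (Fin n → ℝ) → ℝ)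
    (hdd : ∀ t m, dd t m = Real.exp (m ⬝ᵥ (A t *ᵥ m) + B t ⬝ᵥ m + C t)) :
    (∀ m : Fin n → ℝ, dd T m = 1) ∧
      ∀ t ∈ Set.Icc 0 T, ∀ m : Fin n → ℝ,
        derivWithin (fun s => dd s m) (Set.Icc 0 T) t +
            fderiv ℝ (fun v => dd t v) m (κ *ᵥ (μb - m)) +
            (1 / 2) * (Sμ * Matrix.of (fun i j =>
              fderiv ℝ (fun v => fderiv ℝ (fun w => dd t w) v (Pi.single j 1)) m
                (Pi.single i 1))).trace +
            ψ * (m ⬝ᵥ (SR⁻¹ *ᵥ m)) * dd t m = 0 := by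
  obtain rfl : dd = fun t => expQuadratic (A t) (B t) (C t) := funext fun t => funext (hdd t)
  refine ⟨fun m => by simp [expQuadratic, hAT, hBT, hCT], fun t ht m => ?_⟩
  beta_reduce
  rw [(HasDerivWithinAt.expQuadratic (hA t ht) (hB t ht) (hC t ht) m).derivWithin
      (uniqueDiffOn_Icc hT t ht), fderiv_expQuadratic_apply, trace_mul_hessian_expQuadratic]
  linear_combination expQuadratic (A t) (B t) (C t) m *
    riccati_generator_eq_zero κ Sμ SR⁻¹ (A t) hSμ (hAsym t) μb (B t) m ψ

/-- Verification (multidimensional case) that the exponential-quadratic ansatz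
`d(t,m) = exp(mᵀA(t)m + B(t)ᵀm + C(t))`, with `A, B, C` solving the matrix Riccati ODE
system, satisfies the linear parabolic PDE
`∂_t d + (∇_m d)ᵀκ(μ̄−m) + (1/2)tr(Σ_μ ∇²_m d) + ψ mᵀΣ_R⁻¹m · d = 0`
with terminal value `1`. -/
theorem stmt_15 (n : ℕ) (hn : 1 ≤ n) (T : ℝ) (hT : 0 < T)
    (κ : Matrix (Fin n) (Fin n) ℝ) (μb : Fin n → ℝ)
    (Sμ SR : Matrix (Fin n) (Fin n) ℝ)
    (hSμ : Sμ.IsSymm) (hSRsym : SR.IsSymm) (hSRpd : SR.PosDef)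
    (ψ : ℝ)
    (A : ℝ → Matrix (Fin n) (Fin n) ℝ) (B : ℝ → Fin n → ℝ) (C : ℝ → ℝ)
    (hAsym : ∀ t, (A t).IsSymm)
    (hAT : A T = 0) (hBT : B T = 0) (hCT : C T = 0)
    (hA : ∀ t ∈ Set.Icc 0 T, ∀ i j,
      HasDerivWithinAt (fun s => A s i j)
        (((-2 : ℝ) • (A t * Sμ * A t) + κᵀ * A t + A t * κ - ψ • SR⁻¹) i j)
        (Set.Icc 0 T) t)
    (hB : ∀ t ∈ Set.Icc 0 T, ∀ i,
      HasDerivWithinAt (fun s => B s i)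
        (((-2 : ℝ) • (A t *ᵥ (κ *ᵥ μb)) + (κᵀ - (2 : ℝ) • (A t * Sμ)) *ᵥ B t) i)
        (Set.Icc 0 T) t)
    (hC : ∀ t ∈ Set.Icc 0 T,
      HasDerivWithinAt C
        (-(1 / 2) * (B t ⬝ᵥ (Sμ *ᵥ B t)) - B t ⬝ᵥ (κ *ᵥ μb) - (Sμ * A t).trace)
        (Set.Icc 0 T) t)
    (dd : ℝ → (Fin n → ℝ) → ℝ)
    (hdd : ∀ t m, dd t m = Real.exp (m ⬝ᵥ (A t *ᵥ m) + B t ⬝ᵥ m + C t)) :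
    (∀ m : Fin n → ℝ, dd T m = 1) ∧
      ∀ t ∈ Set.Icc 0 T, ∀ m : Fin n → ℝ,
        derivWithin (fun s => dd s m) (Set.Icc 0 T) t +
            fderiv ℝ (fun v => dd t v) m (κ *ᵥ (μb - m)) +
            (1 / 2) * (Sμ * Matrix.of (fun i j =>
              fderiv ℝ (fun v => fderiv ℝ (fun w => dd t w) v (Pi.single j 1)) m
                (Pi.single i 1))).trace +
            ψ * (m ⬝ᵥ (SR⁻¹ *ᵥ m)) * dd t m = 0 :=
  stmt_15_general n T hT κ μb Sμ SR hSμ ψ A B C hAsym hAT hBT hCT hA hB hC dd hdd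
end
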